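/- Let 1 ≤ p < ∞, 1 ≤ q < ∞, and for each holomorphic f : B_{ℓ_q^n} → X with monomial coefficients x_α define the Bohr radius K as the supremum of r ≥ 0 such that sup_{z ∈ rB_{ℓ_q^n}} ∑_α ‖T(x_α)‖^p |z^α|^p ≤ λ ‖f‖^p for all such f. Then the arithmetic Bohr radius A_p(B_{ℓ_q^n}, T, λ), defined as the supremum of (1/n)∑ r_i over admissible nonnegative vectors r, satisfies A_p(B_{ℓ_q^n}, T, λ) ≥ K^p(B_{ℓ_q^n}, T, λ) / n^{1/q}. -/

import Mathlib

/-!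
If `s` is a Bohr radius and `z` lies in the ball `B_{ℓ_q^n}`, then the vector `s|z|` is
admissible, so `s ‖z‖₁ / n ≤ A`. Letting `z = (c, …, c)` with `c ↑ n^{-1/q}` gives
`s / n^{1/q} ≤ A`. The supremum `A` is finite because testing admissibility on a coordinate
function `z ↦ z_i x` with `T x ≠ 0` bounds each `r_i`.
-/

noncomputable section

/-- The open unit ball of `ℓ_q^n` (complex `n`-space with the `q`-norm), `1 ≤ q < ∞`. -/
def ballq (q : ℝ) (n : ℕ) : Set (Fin n → ℂ) :=
  {z | (∑ j, ‖z j‖ ^ q) ^ (1 / q) < 1}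

/-- The monomial `z^α`. -/
def mono {n : ℕ} (z : Fin n → ℂ) (α : Fin n → ℕ) : ℂ := ∏ j, z j ^ α j

/-- The coefficient family `a : α ↦ x_α` represents a bounded holomorphic function
`f(z) = ∑_α x_α z^α` on `B_{ℓ_q^n}` with values in `X`. -/
def IsHinf {X : Type*} [NormedAddCommGroup X] [NormedSpace ℂ X]
    (q : ℝ) (n : ℕ) (a : (Fin n → ℕ) → X) : Prop :=
  (∀ z ∈ ballq q n, Summable fun α => mono z α • a α) ∧
    ∃ M : ℝ, ∀ z ∈ ballq q n, ‖∑' α, mono z α • a α‖ ≤ M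

/-- The sup norm `‖f‖_{B_{ℓ_q^n}}` of the function represented by `a`. -/
def supnorm {X : Type*} [NormedAddCommGroup X] [NormedSpace ℂ X]
    (q : ℝ) (n : ℕ) (a : (Fin n → ℕ) → X) : ℝ :=
  sSup {y | ∃ z ∈ ballq q n, y = ‖∑' α, mono z α • a α‖}

/-- The `λ_p`-Bohr radius `K^p(B_{ℓ_q^n}, T, λ)`: the supremum of all `r ≥ 0` such that
`sup_{z ∈ r B_{ℓ_q^n}} ∑_α ‖T x_α‖^p |z^α|^p ≤ λ ‖f‖^p` for every bounded holomorphic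
`f = ∑ x_α z^α : B_{ℓ_q^n} → X`. -/
def KBohr {X Y : Type*} [NormedAddCommGroup X] [NormedSpace ℂ X]
    [NormedAddCommGroup Y] [NormedSpace ℂ Y]
    (q : ℝ) (n : ℕ) (p lam : ℝ) (T : X →L[ℂ] Y) : ℝ :=
  sSup {r : ℝ | 0 ≤ r ∧ ∀ a : (Fin n → ℕ) → X, IsHinf q n a → ∀ z ∈ ballq q n,
    ∑' α : Fin n → ℕ, ‖T (a α)‖ ^ p * (r ^ (∑ j, α j) * ‖mono z α‖) ^ p
      ≤ lam * supnorm q n a ^ p}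

/-- The `λ_p`-arithmetic Bohr radius `A_p(B_{ℓ_q^n}, T, λ)`: the supremum of
`(1/n)∑ r_i` over nonnegative `r ∈ ℝ^n` with
`∑_α ‖T x_α‖^p r^{pα} ≤ λ ‖f‖^p` for every bounded holomorphic `f = ∑ x_α z^α`. -/
def ABohr {X Y : Type*} [NormedAddCommGroup X] [NormedSpace ℂ X]
    [NormedAddCommGroup Y] [NormedSpace ℂ Y]
    (q : ℝ) (n : ℕ) (p lam : ℝ) (T : X →L[ℂ] Y) : ℝ :=
  sSup {t : ℝ | ∃ r : Fin n → ℝ, (∀ i, 0 ≤ r i) ∧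
    (∀ a : (Fin n → ℕ) → X, IsHinf q n a →
      ∑' α : Fin n → ℕ, ‖T (a α)‖ ^ p * (∏ j, r j ^ α j) ^ p ≤ lam * supnorm q n a ^ p) ∧
    t = (∑ i, r i) / n}



open Filter Topology

section BohrRadii

variable {X Y : Type*} [NormedAddCommGroup X] [NormedSpace ℂ X]
  [NormedAddCommGroup Y] [NormedSpace ℂ Y]

lemma supnorm_nonneg (q : ℝ) (n : ℕ) (a : (Fin n → ℕ) → X) : 0 ≤ supnorm q n a :=
  Real.sSup_nonneg (by rintro y ⟨z, -, rfl⟩; positivity)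

lemma norm_lt_one_of_mem_ballq {q : ℝ} (hq : 0 < q) {n : ℕ} {z : Fin n → ℂ}
    (hz : z ∈ ballq q n) (i : Fin n) : ‖z i‖ < 1 := by
  have hsum : ∑ j, ‖z j‖ ^ q < 1 :=
    (Real.rpow_lt_one_iff' (by positivity) (by positivity)).1 hz
  have hi : ‖z i‖ ^ q < 1 :=
    (Finset.single_le_sum (fun j _ => by positivity) (Finset.mem_univ i)).trans_lt hsum
  exact (Real.rpow_lt_one_iff' (by positivity) hq).1 hi

lemma const_mem_ballq {q : ℝ} (hq : 0 < q) {n : ℕ} {c : ℝ} (hc0 : 0 ≤ c)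
    (hc : (n : ℝ) ^ (1 / q) * c < 1) : (fun _ : Fin n => (c : ℂ)) ∈ ballq q n := by
  have hnorm : (∑ _j : Fin n, ‖(c : ℂ)‖ ^ q) ^ (1 / q) = (n : ℝ) ^ (1 / q) * c := by
    rw [Complex.norm_real, Real.norm_of_nonneg hc0, Finset.sum_const, Finset.card_univ,
      Fintype.card_fin, nsmul_eq_mul, Real.mul_rpow (by positivity) (by positivity), one_div,
      Real.rpow_rpow_inv hc0 hq.ne']
  simpa only [ballq, Set.mem_ofPred_eq, hnorm] using hc

lemma mono_single {n : ℕ} (z : Fin n → ℂ) (i : Fin n) : mono z (Pi.single i 1) = z i := by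
  rw [mono, Finset.prod_eq_single i (fun j _ hj => by simp [hj]) (by simp)]
  simp

lemma norm_prod_mul_pow {n : ℕ} (s : ℝ) (z : Fin n → ℂ) (α : Fin n → ℕ) :
    ∏ j, (s * ‖z j‖) ^ α j = s ^ (∑ j, α j) * ‖mono z α‖ := by
  simp only [mono, norm_prod, norm_pow, mul_pow, Finset.prod_mul_distrib,
    Finset.prod_pow_eq_pow_sum]

-- The coefficients of the coordinate function `z ↦ z_i • x`.
def coordFun (n : ℕ) (i : Fin n) (x : X) : (Fin n → ℕ) → X := Pi.single (Pi.single i 1) x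

lemma tsum_mono_smul_coordFun {n : ℕ} (z : Fin n → ℂ) (i : Fin n) (x : X) :
    ∑' α, mono z α • coordFun n i x α = z i • x := by
  rw [tsum_eq_single (Pi.single i 1) (fun α hα => by simp [coordFun, hα])]
  simp [coordFun, mono_single]

lemma norm_tsum_mono_smul_coordFun_le {q : ℝ} (hq : 0 < q) {n : ℕ} {z : Fin n → ℂ}
    (hz : z ∈ ballq q n) (i : Fin n) (x : X) :
    ‖∑' α, mono z α • coordFun n i x α‖ ≤ ‖x‖ := by
  rw [tsum_mono_smul_coordFun, norm_smul]
  exact mul_le_of_le_one_left (norm_nonneg x) (norm_lt_one_of_mem_ballq hq hz i).le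

lemma isHinf_coordFun {q : ℝ} (hq : 0 < q) (n : ℕ) (i : Fin n) (x : X) :
    IsHinf q n (coordFun n i x) :=
  ⟨fun _ _ => summable_of_ne_finset_zero (s := {Pi.single i 1}) fun α hα => by
      simp [coordFun, Finset.notMem_singleton.1 hα],
    ‖x‖, fun _ hz => norm_tsum_mono_smul_coordFun_le hq hz i x⟩

lemma supnorm_coordFun_le {q : ℝ} (hq : 0 < q) (n : ℕ) (i : Fin n) (x : X) :
    supnorm q n (coordFun n i x) ≤ ‖x‖ :=
  Real.sSup_le (by rintro y ⟨z, hz, rfl⟩; exact norm_tsum_mono_smul_coordFun_le hq hz i x)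
    (norm_nonneg x)

variable (q : ℝ) (n : ℕ) (p lam : ℝ) (T : X →L[ℂ] Y)

def IsAdmissible (r : Fin n → ℝ) : Prop :=
  ∀ a : (Fin n → ℕ) → X, IsHinf q n a →
    ∑' α : Fin n → ℕ, ‖T (a α)‖ ^ p * (∏ j, r j ^ α j) ^ p ≤ lam * supnorm q n a ^ p

def IsBohrRadius (s : ℝ) : Prop :=
  ∀ a : (Fin n → ℕ) → X, IsHinf q n a → ∀ z ∈ ballq q n,
    ∑' α : Fin n → ℕ, ‖T (a α)‖ ^ p * (s ^ (∑ j, α j) * ‖mono z α‖) ^ p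
      ≤ lam * supnorm q n a ^ p

lemma ABohr_eq : ABohr q n p lam T =
    sSup {t | ∃ r, (∀ i, 0 ≤ r i) ∧ IsAdmissible q n p lam T r ∧ t = (∑ i, r i) / n} :=
  rfl

lemma KBohr_eq : KBohr q n p lam T = sSup {s | 0 ≤ s ∧ IsBohrRadius q n p lam T s} :=
  rfl

variable {q n p lam T}

lemma ABohr_nonneg : 0 ≤ ABohr q n p lam T := by
  rw [ABohr_eq]
  refine Real.sSup_nonneg ?_
  rintro t ⟨r, hr, -, rfl⟩
  exact div_nonneg (Finset.sum_nonneg fun i _ => hr i) n.cast_nonneg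

-- The junk value `sSup s = 0` of an unbounded `s` at work: every `s ≥ 0` is a Bohr radius of `0`.
lemma KBohr_zero (hp : p ≠ 0) (hlam : 0 ≤ lam) : KBohr q n p lam (0 : X →L[ℂ] Y) = 0 := by
  have hradii : {s | 0 ≤ s ∧ IsBohrRadius q n p lam (0 : X →L[ℂ] Y) s} = Set.Ici 0 := by
    ext s
    refine ⟨And.left, fun hs => ⟨hs, fun a _ z _ => ?_⟩⟩
    simp only [zero_apply, norm_zero, Real.zero_rpow hp, zero_mul, tsum_zero]
    exact mul_nonneg hlam (Real.rpow_nonneg (supnorm_nonneg q n a) p)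
  rw [KBohr_eq, hradii, Real.sSup_of_not_bddAbove (not_bddAbove_Ici 0)]

lemma IsAdmissible.le_rpow_inv (hq : 0 < q) (hp : 0 < p) (hlam : 0 ≤ lam) {r : Fin n → ℝ}
    (hr : IsAdmissible q n p lam T r) (i : Fin n) (hri : 0 ≤ r i) {x : X}
    (hx : T x ≠ 0) : r i ≤ (lam * ‖x‖ ^ p / ‖T x‖ ^ p) ^ p⁻¹ := by
  have hcoord := hr (coordFun n i x) (isHinf_coordFun hq n i x)
  rw [tsum_eq_single (Pi.single i 1) fun α hα => by
      simp [coordFun, hα, Real.zero_rpow hp.ne']] at hcoord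
  have hprod : ∏ j, r j ^ (Pi.single i 1 : Fin n → ℕ) j = r i := by
    rw [Finset.prod_eq_single i (fun j _ hj => by simp [hj]) (by simp)]
    simp
  rw [hprod, coordFun, Pi.single_eq_same] at hcoord
  have hsup : lam * supnorm q n (coordFun n i x) ^ p ≤ lam * ‖x‖ ^ p := by
    gcongr
    · exact supnorm_nonneg q n _
    · exact supnorm_coordFun_le hq n i x
  rw [Real.le_rpow_inv_iff_of_pos hri (by positivity) hp,
    le_div_iff₀ (Real.rpow_pos_of_pos (norm_pos_iff.2 hx) p), mul_comm]
  exact hcoord.trans hsup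

lemma bddAbove_admissible_means (hq : 0 < q) (hp : 0 < p) (hlam : 0 ≤ lam) (hT : T ≠ 0) :
    BddAbove {t | ∃ r, (∀ i, 0 ≤ r i) ∧ IsAdmissible q n p lam T r ∧ t = (∑ i, r i) / n} := by
  obtain ⟨x, hx⟩ : ∃ x, T x ≠ 0 := by
    by_contra! h
    exact hT (ContinuousLinearMap.ext h)
  refine ⟨(lam * ‖x‖ ^ p / ‖T x‖ ^ p) ^ p⁻¹, ?_⟩
  rintro t ⟨r, hr0, hr, rfl⟩
  refine div_le_of_le_mul₀ n.cast_nonneg (by positivity) ?_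
  calc ∑ i, r i ≤ ∑ _i : Fin n, (lam * ‖x‖ ^ p / ‖T x‖ ^ p) ^ p⁻¹ :=
        Finset.sum_le_sum fun i _ => hr.le_rpow_inv hq hp hlam i (hr0 i) hx
    _ = (lam * ‖x‖ ^ p / ‖T x‖ ^ p) ^ p⁻¹ * n := by simp [mul_comm]

lemma IsBohrRadius.isAdmissible {s : ℝ} (hs : IsBohrRadius q n p lam T s) {z : Fin n → ℂ}
    (hz : z ∈ ballq q n) : IsAdmissible q n p lam T fun j => s * ‖z j‖ := by
  intro a ha
  simpa only [norm_prod_mul_pow] using hs a ha z hz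

lemma div_rpow_le_ABohr (hq : 0 < q) (hp : 0 < p) (hlam : 0 ≤ lam) (hT : T ≠ 0) (hn : 0 < n)
    {s : ℝ} (hs0 : 0 ≤ s) (hs : IsBohrRadius q n p lam T s) :
    s / (n : ℝ) ^ (1 / q) ≤ ABohr q n p lam T := by
  have hN : 0 < (n : ℝ) ^ (1 / q) := by positivity
  have hconst : ∀ c ∈ Set.Ioo 0 ((n : ℝ) ^ (1 / q))⁻¹, s * c ≤ ABohr q n p lam T := by
    rintro c ⟨hc0, hc⟩
    have hz := const_mem_ballq hq hc0.le (n := n) (by rwa [← lt_inv_mul_iff₀ hN, mul_one])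
    rw [ABohr_eq]
    refine le_csSup (bddAbove_admissible_means hq hp hlam hT)
      ⟨_, fun _ => by positivity, hs.isAdmissible hz, ?_⟩
    simp only [Complex.norm_real, Real.norm_of_nonneg hc0.le, Finset.sum_const, Finset.card_univ,
      Fintype.card_fin, nsmul_eq_mul]
    field_simp
  have hlim : Tendsto (fun c => s * c) (𝓝[<] ((n : ℝ) ^ (1 / q))⁻¹)
      (𝓝 (s / (n : ℝ) ^ (1 / q))) :=
    ((continuous_const_mul s).tendsto _).mono_left nhdsWithin_le_nhds
  exact le_of_tendsto hlim (eventually_of_mem (Ioo_mem_nhdsLT (by positivity)) hconst)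

end BohrRadii

/-- Lemma 3.2: `A_p(B_{ℓ_q^n}, T, λ) ≥ K^p(B_{ℓ_q^n}, T, λ) / n^{1/q}`. -/
theorem stmt8 {X Y : Type*} [NormedAddCommGroup X] [NormedSpace ℂ X]
    [NormedAddCommGroup Y] [NormedSpace ℂ Y]
    (p q lam : ℝ) (hp : 1 ≤ p) (hq : 1 ≤ q) (hlam : 1 ≤ lam)
    (n : ℕ) (hn : 0 < n) (T : X →L[ℂ] Y) :
    ABohr q n p lam T ≥ KBohr q n p lam T / (n : ℝ) ^ (1 / q) := by
  have hp0 : 0 < p := by linarith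
  have hq0 : 0 < q := by linarith
  have hlam0 : 0 ≤ lam := by linarith
  rcases eq_or_ne T 0 with rfl | hT
  · rw [KBohr_zero hp0.ne' hlam0, zero_div]
    exact ABohr_nonneg
  · have hN : 0 < (n : ℝ) ^ (1 / q) := by positivity
    rw [ge_iff_le, div_le_iff₀ hN, KBohr_eq]
    refine Real.sSup_le (fun s ⟨hs0, hs⟩ => ?_) (mul_nonneg ABohr_nonneg hN.le)
    rw [← div_le_iff₀ hN]
    exact div_rpow_le_ABohr hq0 hp0 hlam0 hT hn hs0 hs

end
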